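/- arXiv:2208.05683 — 3 statements merged into one kernel-verified Lean document; each statement's English description precedes it below -/
import Mathlib

section
/- Let Z be an n×n complex matrix, ‖·‖ a submultiplicative matrix norm (e.g., the L∞-operator norm), q ≥ 2, b ≥ 2, and scalars a_0, …, a_{qb−1}. Let ζ_2, …, ζ_q and Σ_1, …, Σ_{b−1} be n×n matrices. Define Ẑ_{(j)} = Z^j − ∑_{k=2}^{j} Z^{j−k} ζ_k for 0 ≤ j ≤ q, B̂_i = ∑_{j=0}^{q−1} a_{iq+j} Ẑ_{(j)}, and the filtered Horner iterates Ŝ_0 = B̂_{b−1}, Ŝ_i = B̂_{b−1−i} + Ẑ_{(q)}·Ŝ_{i−1} − Σ_i for 1 ≤ i ≤ b−1. Let S_{b−1} = ∑_{i=0}^{b−1} (Z^q)^i B_i with B_i = ∑_{j=0}^{q−1} a_{iq+j} Z^j be the exact Paterson–Stockmeyer result. Then ‖S_{b−1} − Ŝ_{b−1}‖ ≤ ∑_{k=2}^{q} d_k ‖ζ_k‖ + ∑_{j=1}^{b−1} ‖Z^{q(b−1−j)}‖·‖Σ_j‖, where d_k = ∑_{j=0}^{b−1} ‖Z^{q(b−1−j)}‖·(β_{b−1−j,k}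 + ‖Z^{q−k}‖·‖Ŝ_{j−1}‖), β_{i,k} = ∑_{m=k}^{q−1} |a_{iq+m}|·‖Z^{m−k}‖ for k ≤ q−1, β_{i,q} = 0, and ‖Ŝ_{−1}‖ := 0. -/
attribute [local instance]
  Matrix.linftyOpNormedAddCommGroup Matrix.linftyOpNormedRing
  Matrix.linftyOpNormedAlgebra

/-- **Total filtering error bound for the Paterson–Stockmeyer scheme**
(paper's bound (23), exact form with the computed iterates `Ŝ_{j-1}`).
With filtered powers `Ẑ_j = Z^j − ∑_{k=2}^{j} Z^{j-k} ζ_k`, filtered blocks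
`B̂_i = ∑_{j=0}^{q-1} a_{iq+j} Ẑ_j`, and filtered Horner iterates
`Ŝ_0 = B̂_{b-1}`, `Ŝ_i = B̂_{b-1-i} + Ẑ_q Ŝ_{i-1} − Σ_i`, the exact value
`S_{b-1} = ∑_{i=0}^{b-1} (Z^q)^i B_i` satisfies
`‖S_{b-1} − Ŝ_{b-1}‖ ≤ ∑_{k=2}^{q} d_k ‖ζ_k‖ + ∑_{j=1}^{b-1} ‖Z^{q(b-1-j)}‖ ‖Σ_j‖`
where `d_k = ∑_{j=0}^{b-1} ‖Z^{q(b-1-j)}‖ (β_{b-1-j,k} + ‖Z^{q-k}‖ ‖Ŝ_{j-1}‖)`,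
`β_{i,k} = ∑_{m=k}^{q-1} |a_{iq+m}| ‖Z^{m-k}‖` (so `β_{i,q} = 0`), and
`‖Ŝ_{-1}‖ := 0`. -/
theorem ps_scheme_total_filtering_error_bound {n : ℕ}
    (Z : Matrix (Fin n) (Fin n) ℂ) (q b : ℕ) (hq : 2 ≤ q) (hb : 2 ≤ b)
    (a : ℕ → ℂ)
    (ζ Sig Zh Bh Sh : ℕ → Matrix (Fin n) (Fin n) ℂ)
    (hZh : ∀ j ≤ q, Zh j = Z ^ j - ∑ k ∈ Finset.Icc 2 j, Z ^ (j - k) * ζ k)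
    (hBh : ∀ i, Bh i = ∑ j ∈ Finset.range q, a (i * q + j) • Zh j)
    (hSh0 : Sh 0 = Bh (b - 1))
    (hSh : ∀ i, 1 ≤ i → i ≤ b - 1 →
      Sh i = Bh (b - 1 - i) + Zh q * Sh (i - 1) - Sig i) :
    ‖(∑ i ∈ Finset.range b,
        (Z ^ q) ^ i * ∑ j ∈ Finset.range q, a (i * q + j) • Z ^ j)
      - Sh (b - 1)‖ ≤
      (∑ k ∈ Finset.Icc 2 q,
        (∑ j ∈ Finset.range b, ‖Z ^ (q * (b - 1 - j))‖ *
          ((∑ m ∈ Finset.Icc k (q - 1),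
              ‖a ((b - 1 - j) * q + m)‖ * ‖Z ^ (m - k)‖)
            + ‖Z ^ (q - k)‖ * (if j = 0 then 0 else ‖Sh (j - 1)‖))) * ‖ζ k‖)
      + ∑ j ∈ Finset.Icc 1 (b - 1), ‖Z ^ (q * (b - 1 - j))‖ * ‖Sig j‖ := by
  classical
  -- exact blocks
  set B : ℕ → Matrix (Fin n) (Fin n) ℂ :=
    fun m => ∑ j ∈ Finset.range q, a (m * q + j) • Z ^ j with hBdef
  -- local error terms
  set T : ℕ → Matrix (Fin n) (Fin n) ℂ :=
    fun j => (B (b - 1 - j) - Bh (b - 1 - j))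
      + (if j = 0 then 0 else (Z ^ q - Zh q) * Sh (j - 1) + Sig j) with hTdef
  -- index swap lemma
  have hswap : ∀ (f : ℕ → ℕ → ℝ),
      ∑ j ∈ Finset.range q, ∑ k ∈ Finset.Icc 2 j, f j k
        = ∑ k ∈ Finset.Icc 2 q, ∑ j ∈ Finset.Icc k (q - 1), f j k := by
    intro f
    rw [Finset.sum_sigma', Finset.sum_sigma']
    apply Finset.sum_nbij' (i := fun p => ⟨p.2, p.1⟩) (j := fun p => ⟨p.2, p.1⟩)
    · rintro ⟨x, y⟩ h
      simp only [Finset.mem_sigma, Finset.mem_range, Finset.mem_Icc] at h ⊢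
      omega
    · rintro ⟨x, y⟩ h
      simp only [Finset.mem_sigma, Finset.mem_range, Finset.mem_Icc] at h ⊢
      omega
    · rintro ⟨x, y⟩ _; rfl
    · rintro ⟨x, y⟩ _; rfl
    · rintro ⟨x, y⟩ _; rfl
  -- block error bound
  have hDB : ∀ m, ‖B m - Bh m‖ ≤
      ∑ k ∈ Finset.Icc 2 q,
        (∑ j ∈ Finset.Icc k (q - 1), ‖a (m * q + j)‖ * ‖Z ^ (j - k)‖) * ‖ζ k‖ := by
    intro m
    have e1 : B m - Bh m
        = ∑ j ∈ Finset.range q, a (m * q + j) •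
            (∑ k ∈ Finset.Icc 2 j, Z ^ (j - k) * ζ k) := by
      rw [hBh, hBdef, ← Finset.sum_sub_distrib]
      refine Finset.sum_congr rfl fun j hj => ?_
      rw [← smul_sub, hZh j (le_of_lt (Finset.mem_range.mp hj)), sub_sub_cancel]
    calc ‖B m - Bh m‖
        ≤ ∑ j ∈ Finset.range q, ∑ k ∈ Finset.Icc 2 j,
            ‖a (m * q + j)‖ * ‖Z ^ (j - k)‖ * ‖ζ k‖ := by
          rw [e1]
          refine (norm_sum_le _ _).trans (Finset.sum_le_sum fun j _ => ?_)
          rw [norm_smul]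
          have h1 : ‖∑ k ∈ Finset.Icc 2 j, Z ^ (j - k) * ζ k‖
              ≤ ∑ k ∈ Finset.Icc 2 j, ‖Z ^ (j - k)‖ * ‖ζ k‖ :=
            (norm_sum_le _ _).trans (Finset.sum_le_sum fun k _ => norm_mul_le _ _)
          refine (mul_le_mul_of_nonneg_left h1 (norm_nonneg _)).trans (le_of_eq ?_)
          rw [Finset.mul_sum]
          exact Finset.sum_congr rfl fun k _ => by ring
      _ = ∑ k ∈ Finset.Icc 2 q,
            (∑ j ∈ Finset.Icc k (q - 1), ‖a (m * q + j)‖ * ‖Z ^ (j - k)‖) * ‖ζ k‖ := by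
          rw [hswap]
          exact Finset.sum_congr rfl fun k _ => by rw [Finset.sum_mul]
  -- exact form of the error: unrolled Horner recursion
  have key : ∀ i, i ≤ b - 1 →
      (∑ m ∈ Finset.range (i + 1), (Z ^ q) ^ (i - m) * B (b - 1 - m)) - Sh i
        = ∑ j ∈ Finset.range (i + 1), (Z ^ q) ^ (i - j) * T j := by
    intro i
    induction i with
    | zero =>
      intro _
      simp [hTdef, hSh0]
    | succ i ih =>
      intro h
      have hpeel : ∀ (f : ℕ → Matrix (Fin n) (Fin n) ℂ),
          ∑ m ∈ Finset.range (i + 2), (Z ^ q) ^ (i + 1 - m) * f m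
            = Z ^ q * (∑ m ∈ Finset.range (i + 1), (Z ^ q) ^ (i - m) * f m)
              + f (i + 1) := by
        intro f
        rw [Finset.sum_range_succ, Nat.sub_self, pow_zero, one_mul, Finset.mul_sum]
        congr 1
        refine Finset.sum_congr rfl fun m hm => ?_
        have hmi : m ≤ i := Nat.lt_succ_iff.mp (Finset.mem_range.mp hm)
        rw [show i + 1 - m = (i - m) + 1 by omega, pow_succ', mul_assoc]
      rw [hpeel, hpeel, hSh (i + 1) (by omega) h]
      have ihe := ih (by omega)
      have hT1 : T (i + 1) = (B (b - 1 - (i + 1)) - Bh (b - 1 - (i + 1)))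
          + ((Z ^ q - Zh q) * Sh i + Sig (i + 1)) := by
        simp [hTdef]
      rw [hT1, ← ihe]
      simp only [Nat.add_sub_cancel]
      noncomm_ring
  -- norm bound for the local error terms
  have hTbound : ∀ j, ‖T j‖ ≤
      (∑ k ∈ Finset.Icc 2 q,
        ((∑ m ∈ Finset.Icc k (q - 1), ‖a ((b - 1 - j) * q + m)‖ * ‖Z ^ (m - k)‖)
          + ‖Z ^ (q - k)‖ * (if j = 0 then 0 else ‖Sh (j - 1)‖)) * ‖ζ k‖)
      + (if j = 0 then 0 else ‖Sig j‖) := by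
    intro j
    have expand : (∑ k ∈ Finset.Icc 2 q,
        ((∑ m ∈ Finset.Icc k (q - 1), ‖a ((b - 1 - j) * q + m)‖ * ‖Z ^ (m - k)‖)
          + ‖Z ^ (q - k)‖ * (if j = 0 then 0 else ‖Sh (j - 1)‖)) * ‖ζ k‖)
        = (∑ k ∈ Finset.Icc 2 q,
            (∑ m ∈ Finset.Icc k (q - 1), ‖a ((b - 1 - j) * q + m)‖ * ‖Z ^ (m - k)‖)
              * ‖ζ k‖)
          + (∑ k ∈ Finset.Icc 2 q,
              ‖Z ^ (q - k)‖ * (if j = 0 then 0 else ‖Sh (j - 1)‖) * ‖ζ k‖) := by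
      rw [← Finset.sum_add_distrib]
      exact Finset.sum_congr rfl fun k _ => by ring
    rw [expand]
    by_cases hj : j = 0
    · subst hj
      simp only [hTdef, if_pos rfl, add_zero, if_true]
      simp only [mul_zero, zero_mul, Finset.sum_const_zero, add_zero]
      exact hDB (b - 1 - 0)
    · have hW : Z ^ q - Zh q = ∑ k ∈ Finset.Icc 2 q, Z ^ (q - k) * ζ k := by
        rw [hZh q le_rfl, sub_sub_cancel]
      have hTj : T j = (B (b - 1 - j) - Bh (b - 1 - j))
          + ((Z ^ q - Zh q) * Sh (j - 1) + Sig j) := by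
        simp [hTdef, hj]
      rw [hTj]
      simp only [if_neg hj]
      refine (norm_add_le _ _).trans ?_
      rw [add_assoc]
      refine add_le_add (hDB _) ?_
      refine (norm_add_le _ _).trans (add_le_add ?_ le_rfl)
      rw [hW, Finset.sum_mul]
      refine (norm_sum_le _ _).trans (Finset.sum_le_sum fun k _ => ?_)
      calc ‖Z ^ (q - k) * ζ k * Sh (j - 1)‖
          ≤ ‖Z ^ (q - k) * ζ k‖ * ‖Sh (j - 1)‖ := norm_mul_le _ _
        _ ≤ ‖Z ^ (q - k)‖ * ‖ζ k‖ * ‖Sh (j - 1)‖ :=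
            mul_le_mul_of_nonneg_right (norm_mul_le _ _) (norm_nonneg _)
        _ = ‖Z ^ (q - k)‖ * ‖Sh (j - 1)‖ * ‖ζ k‖ := by ring
  -- assemble
  have hb1 : b - 1 + 1 = b := by omega
  have hLHS : (∑ i ∈ Finset.range b,
        (Z ^ q) ^ i * ∑ j ∈ Finset.range q, a (i * q + j) • Z ^ j)
      = ∑ m ∈ Finset.range (b - 1 + 1), (Z ^ q) ^ (b - 1 - m) * B (b - 1 - m) := by
    rw [hb1, ← Finset.sum_range_reflect (fun i => (Z ^ q) ^ i * B i) b]
  rw [hLHS, show (∑ m ∈ Finset.range (b - 1 + 1), (Z ^ q) ^ (b - 1 - m) * B (b - 1 - m))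
      - Sh (b - 1) = ∑ j ∈ Finset.range (b - 1 + 1), (Z ^ q) ^ (b - 1 - j) * T j from
      key (b - 1) le_rfl, hb1]
  calc ‖∑ j ∈ Finset.range b, (Z ^ q) ^ (b - 1 - j) * T j‖
      ≤ ∑ j ∈ Finset.range b, ‖Z ^ (q * (b - 1 - j))‖ * ‖T j‖ := by
        refine (norm_sum_le _ _).trans (Finset.sum_le_sum fun j _ => ?_)
        rw [pow_mul]
        exact norm_mul_le _ _
    _ ≤ ∑ j ∈ Finset.range b, ‖Z ^ (q * (b - 1 - j))‖ *
          ((∑ k ∈ Finset.Icc 2 q,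
            ((∑ m ∈ Finset.Icc k (q - 1), ‖a ((b - 1 - j) * q + m)‖ * ‖Z ^ (m - k)‖)
              + ‖Z ^ (q - k)‖ * (if j = 0 then 0 else ‖Sh (j - 1)‖)) * ‖ζ k‖)
            + (if j = 0 then 0 else ‖Sig j‖)) := by
        exact Finset.sum_le_sum fun j _ =>
          mul_le_mul_of_nonneg_left (hTbound j) (norm_nonneg _)
    _ = _ := by
        have split : (∑ j ∈ Finset.range b, ‖Z ^ (q * (b - 1 - j))‖ *
              ((∑ k ∈ Finset.Icc 2 q,
                ((∑ m ∈ Finset.Icc k (q - 1),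
                    ‖a ((b - 1 - j) * q + m)‖ * ‖Z ^ (m - k)‖)
                  + ‖Z ^ (q - k)‖ * (if j = 0 then 0 else ‖Sh (j - 1)‖)) * ‖ζ k‖)
                + (if j = 0 then 0 else ‖Sig j‖)))
            = (∑ j ∈ Finset.range b, ∑ k ∈ Finset.Icc 2 q,
                ‖Z ^ (q * (b - 1 - j))‖ *
                  (((∑ m ∈ Finset.Icc k (q - 1),
                      ‖a ((b - 1 - j) * q + m)‖ * ‖Z ^ (m - k)‖)
                    + ‖Z ^ (q - k)‖ * (if j = 0 then 0 else ‖Sh (j - 1)‖)) * ‖ζ k‖))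
              + ∑ j ∈ Finset.range b, ‖Z ^ (q * (b - 1 - j))‖ *
                  (if j = 0 then 0 else ‖Sig j‖) := by
          rw [← Finset.sum_add_distrib]
          refine Finset.sum_congr rfl fun j _ => ?_
          rw [mul_add, Finset.mul_sum]
        rw [split]
        congr 1
        · rw [Finset.sum_comm]
          refine Finset.sum_congr rfl fun k _ => ?_
          rw [Finset.sum_mul]
          refine Finset.sum_congr rfl fun j _ => ?_
          ring
        · have hins : Finset.range b = insert 0 (Finset.Icc 1 (b - 1)) := by
            ext x
            simp only [Finset.mem_range, Finset.mem_insert, Finset.mem_Icc]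
            omega
          rw [hins, Finset.sum_insert (by simp)]
          rw [if_pos rfl, mul_zero, zero_add]
          refine Finset.sum_congr rfl fun j hj => ?_
          rw [if_neg (by simp only [Finset.mem_Icc] at hj; omega)]
end

section
/- Let Z be an n×n complex matrix and ‖·‖ a submultiplicative matrix norm (e.g., the L∞-operator norm). Let K ≥ 2 be an even integer and define α_K = max{ ‖Z^k‖^{1/k} : ⌈K/2⌉ ≤ k ≤ K }. Then for every integer i ≥ ⌈(K+1)/2⌉, ‖Z^i‖ ≤ α_K^i. -/
attribute [local instance]
  Matrix.linftyOpNormedAddCommGroup Matrix.linftyOpNormedRing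
  Matrix.linftyOpNormedAlgebra

/-- **Paper's Lemma 1** (corollary of Sastre et al.).
Let `K ≥ 2` be even and `α_K = max { ‖Z^k‖^(1/k) : ⌈K/2⌉ ≤ k ≤ K }`.
Then `‖Z^i‖ ≤ α_K^i` for every `i ≥ ⌈(K+1)/2⌉` (which equals `(K+2)/2` in
natural-number division since `K` is even). -/
theorem norm_matrix_power_bound_alphaK {n : ℕ}
    (Z : Matrix (Fin n) (Fin n) ℂ) (K : ℕ) (hK : 2 ≤ K) (hKeven : Even K)
    (αK : ℝ)
    (hα : αK = (Finset.Icc (K / 2) K).sup'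
        (Finset.nonempty_Icc.mpr (Nat.div_le_self K 2))
        (fun k => ‖Z ^ k‖ ^ ((k : ℝ)⁻¹))) :
    ∀ i : ℕ, (K + 2) / 2 ≤ i → ‖Z ^ i‖ ≤ αK ^ i := by
  have hK2 : 1 ≤ K / 2 := Nat.one_le_div_iff (by norm_num) |>.mpr hK
  have hα0 : 0 ≤ αK := by
    rw [hα]
    refine le_trans ?_ (Finset.le_sup' _ (Finset.mem_Icc.mpr ⟨le_refl _, Nat.div_le_self K 2⟩))
    positivity
  -- key: for k in [K/2, K], ‖Z^k‖ ≤ αK^k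
  have key : ∀ k ∈ Finset.Icc (K / 2) K, ‖Z ^ k‖ ≤ αK ^ k := by
    intro k hk
    have hk1 : k ≠ 0 := by
      have := (Finset.mem_Icc.mp hk).1; omega
    have h1 : ‖Z ^ k‖ ^ ((k : ℝ)⁻¹) ≤ αK := by
      rw [hα]; exact Finset.le_sup' (fun m : ℕ => ‖Z ^ m‖ ^ ((m : ℝ)⁻¹)) hk
    calc ‖Z ^ k‖ = (‖Z ^ k‖ ^ ((k : ℝ)⁻¹)) ^ k := by
          rw [Real.rpow_inv_natCast_pow (norm_nonneg _) hk1]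
      _ ≤ αK ^ k := pow_le_pow_left₀ (Real.rpow_nonneg (norm_nonneg _) _) h1 k
  have hKhalf : (K + 2) / 2 = K / 2 + 1 := by omega
  intro i
  induction i using Nat.strong_induction_on with
  | _ i ih =>
    intro hi
    by_cases hiK : i ≤ K
    · exact key i (Finset.mem_Icc.mpr ⟨by omega, hiK⟩)
    · push_neg at hiK
      have hj : i = K / 2 + (i - K / 2) := by omega
      have hjlt : i - K / 2 < i := by omega
      have hjge : (K + 2) / 2 ≤ i - K / 2 := by
        rw [hKhalf]
        have : K / 2 + K / 2 = K := by
          obtain ⟨m, hm⟩ := hKeven; omega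
        omega
      calc ‖Z ^ i‖ = ‖Z ^ (K / 2) * Z ^ (i - K / 2)‖ := by rw [← pow_add, ← hj]
        _ ≤ ‖Z ^ (K / 2)‖ * ‖Z ^ (i - K / 2)‖ := norm_mul_le _ _
        _ ≤ αK ^ (K / 2) * αK ^ (i - K / 2) := by
            exact mul_le_mul (key _ (Finset.mem_Icc.mpr ⟨le_refl _, Nat.div_le_self K 2⟩))
              (ih _ hjlt hjge) (norm_nonneg _) (pow_nonneg hα0 _)
        _ = αK ^ i := by rw [← pow_add, ← hj]
end

section
/- Let Z be an n×n complex matrix, ‖·‖ a submultiplicative matrix norm (e.g., the L∞-operator norm), q ≥ 2, b ≥ 2. Let ζ_2,…,ζ_q and Σ_1,…,Σ_{b−1} be n×n matrices, and define the filtered objects Ẑ_{(j)} = Z^j − ∑_{k=2}^{j} Z^{j−k} ζ_k (0 ≤ j ≤ q), B̂_i = ∑_{j=0}^{q−1} a_{iq+j} Ẑ_{(j)}, Ŝ_0 = B̂_{b−1}, Ŝ_i = B̂_{b−1−i} + Ẑ_{(q)}·Ŝ_{i−1} − Σ_i. With B_i = ∑_{j=0}^{q−1} a_{iq+j} Z^j,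 S_0 = B_{b−1}, S_i = B_{b−1−i} + Z^q·S_{i−1}, the errors ΔS_i = S_i − Ŝ_i satisfy the exact recurrence ΔS_0 = ΔB_{b−1} and ΔS_i = Z^q·ΔS_{i−1} + Φ_i for 1 ≤ i ≤ b−1, where Φ_i = ΔB_{b−1−i} + ΔZ_{(q)}·Ŝ_{i−1} + Σ_i, ΔB_i = B_i − B̂_i, and ΔZ_{(q)} = ∑_{k=2}^{q} Z^{q−k} ζ_k. -/
/-- **Exact error-propagation recurrence** (paper's relations (15)–(16), exact
form with the computed iterate `Ŝ_{i-1}`).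
With exact iterates `B_i = ∑_{j=0}^{q-1} a_{iq+j} Z^j`, `S_0 = B_{b-1}`,
`S_i = B_{b-1-i} + Z^q S_{i-1}`, and filtered iterates
`Ẑ_j = Z^j − ∑_{k=2}^{j} Z^{j-k} ζ_k`, `B̂_i = ∑_{j=0}^{q-1} a_{iq+j} Ẑ_j`,
`Ŝ_0 = B̂_{b-1}`, `Ŝ_i = B̂_{b-1-i} + Ẑ_q Ŝ_{i-1} − Σ_i`, the errors
`ΔS_i = S_i − Ŝ_i` satisfy `ΔS_0 = ΔB_{b-1}` and
`ΔS_i = Z^q ΔS_{i-1} + Φ_i` for `1 ≤ i ≤ b−1`, where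
`Φ_i = ΔB_{b-1-i} + ΔZ_(q) Ŝ_{i-1} + Σ_i`, `ΔB_i = B_i − B̂_i`, and
`ΔZ_(q) = ∑_{k=2}^{q} Z^{q-k} ζ_k`. -/
theorem ps_scheme_exact_error_recurrence {n : ℕ}
    (Z : Matrix (Fin n) (Fin n) ℂ) (q b : ℕ) (hq : 2 ≤ q) (hb : 2 ≤ b)
    (a : ℕ → ℂ)
    (ζ Sig B S Zh Bh Sh : ℕ → Matrix (Fin n) (Fin n) ℂ)
    (hB : ∀ i, B i = ∑ j ∈ Finset.range q, a (i * q + j) • Z ^ j)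
    (hS0 : S 0 = B (b - 1))
    (hS : ∀ i, 1 ≤ i → i ≤ b - 1 → S i = B (b - 1 - i) + Z ^ q * S (i - 1))
    (hZh : ∀ j ≤ q, Zh j = Z ^ j - ∑ k ∈ Finset.Icc 2 j, Z ^ (j - k) * ζ k)
    (hBh : ∀ i, Bh i = ∑ j ∈ Finset.range q, a (i * q + j) • Zh j)
    (hSh0 : Sh 0 = Bh (b - 1))
    (hSh : ∀ i, 1 ≤ i → i ≤ b - 1 →
      Sh i = Bh (b - 1 - i) + Zh q * Sh (i - 1) - Sig i) :
    S 0 - Sh 0 = B (b - 1) - Bh (b - 1) ∧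
    ∀ i, 1 ≤ i → i ≤ b - 1 →
      S i - Sh i = Z ^ q * (S (i - 1) - Sh (i - 1)) +
        ((B (b - 1 - i) - Bh (b - 1 - i))
          + (∑ k ∈ Finset.Icc 2 q, Z ^ (q - k) * ζ k) * Sh (i - 1)
          + Sig i) := by
  refine ⟨by rw [hS0, hSh0], fun i h1 h2 => ?_⟩
  rw [hS i h1 h2, hSh i h1 h2, hZh q le_rfl]
  noncomm_ring
end
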